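/- If C : X → GL(d,ℝ) is a conjugacy between the cocycles 𝒜ᴺ and ℬᴺ over fᴺ and also a conjugacy between 𝒜ᴷ and ℬᴷ over fᴷ, where N and K are coprime positive integers, then C is a conjugacy between 𝒜 and ℬ over f. -/

import Mathlib

/-!
The set of `n` for which `C` conjugates the `n`-th iterates of the two cocycles is closed under
addition (by the cocycle identity) and under cancellation: if it contains `m + n` and `n`, it
contains `m`, because `fⁿ` is onto. Running Euclid's algorithm inside such a set shows that it
contains `gcd N K = 1`.
-/

/-- The iterates of a `GL(d,ℝ)`-valued cocycle over `f`. -/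
def cocycleIter {X : Type*} {d : ℕ} (f : X → X) (A : X → GL (Fin d) ℝ) :
    ℕ → X → GL (Fin d) ℝ
  | 0, _ => 1
  | n + 1, x => A (f^[n] x) * cocycleIter f A n x

theorem Nat.gcd_mem_of_add_mem_of_cancel {S : Set ℕ}
    (hadd : ∀ {a b}, a ∈ S → b ∈ S → a + b ∈ S) (hcancel : ∀ {a b}, a + b ∈ S → b ∈ S → a ∈ S)
    {m n : ℕ} (hm : m ∈ S) (hn : n ∈ S) : Nat.gcd m n ∈ S := by
  induction m, n using Nat.gcd.induction with
  | H0 n => simpa using hn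
  | H1 m n _ ih =>
    have hmul : ∀ k, m * k ∈ S := by
      intro k
      induction k with
      | zero => exact hcancel (by simpa using hm) hm
      | succ k ihk => exact hadd ihk hm
    have hmod : n % m ∈ S := hcancel (by rwa [Nat.mod_add_div]) (hmul (n / m))
    rw [Nat.gcd_rec]
    exact ih hmod hm

section Conjugacy

variable {X : Type*} {d : ℕ} (f : X → X) (A B C : X → GL (Fin d) ℝ)

theorem cocycleIter_add (m n : ℕ) (x : X) :
    cocycleIter f A (m + n) x = cocycleIter f A m (f^[n] x) * cocycleIter f A n x := by
  induction m with
  | zero => simp [cocycleIter]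
  | succ m ih =>
    rw [Nat.add_right_comm]
    simp only [cocycleIter, ih, ← Function.iterate_add_apply, mul_assoc]

def IsConjugacyAt (n : ℕ) : Prop :=
  ∀ x, cocycleIter f A n x = C (f^[n] x) * cocycleIter f B n x * (C x)⁻¹

variable {f A B C}

theorem IsConjugacyAt.add {m n : ℕ} (hm : IsConjugacyAt f A B C m)
    (hn : IsConjugacyAt f A B C n) : IsConjugacyAt f A B C (m + n) := by
  intro x
  rw [cocycleIter_add, cocycleIter_add, hm, hn, Function.iterate_add_apply]
  group

theorem IsConjugacyAt.of_add (hf : Function.Surjective f) {m n : ℕ}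
    (hmn : IsConjugacyAt f A B C (m + n)) (hn : IsConjugacyAt f A B C n) :
    IsConjugacyAt f A B C m := by
  intro y
  obtain ⟨x, rfl⟩ := (hf.iterate n) y
  have h := hmn x
  rw [cocycleIter_add, cocycleIter_add, hn, Function.iterate_add_apply] at h
  apply mul_right_cancel (b := C (f^[n] x) * cocycleIter f B n x * (C x)⁻¹)
  rw [h]
  group

theorem isConjugacyAt_one_iff :
    IsConjugacyAt f A B C 1 ↔ ∀ x, A x = C (f x) * B x * (C x)⁻¹ := by
  simp [IsConjugacyAt, cocycleIter]

end Conjugacy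

theorem stmt4_general {X : Type*} {d : ℕ} (f : X → X) (hf : Function.Bijective f)
    (A B C : X → GL (Fin d) ℝ) (N K : ℕ)
    (hco : Nat.Coprime N K)
    (hCN : ∀ x, cocycleIter f A N x = C (f^[N] x) * cocycleIter f B N x * (C x)⁻¹)
    (hCK : ∀ x, cocycleIter f A K x = C (f^[K] x) * cocycleIter f B K x * (C x)⁻¹) :
    ∀ x, A x = C (f x) * B x * (C x)⁻¹ := by
  have hgcd : IsConjugacyAt f A B C (Nat.gcd N K) :=
    Nat.gcd_mem_of_add_mem_of_cancel (S := {n | IsConjugacyAt f A B C n})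
      (fun ha hb => ha.add hb) (fun hab hb => hab.of_add hf.surjective hb) hCN hCK
  rw [hco.gcd_eq_one] at hgcd
  exact isConjugacyAt_one_iff.mp hgcd

/-- If `C` is a conjugacy between the cocycles `𝒜ᴺ` and `ℬᴺ` over `fᴺ` and also between
`𝒜ᴷ` and `ℬᴷ` over `fᴷ`, where `N` and `K` are coprime positive integers, then `C` is a
conjugacy between `𝒜` and `ℬ` over `f`. -/
theorem stmt4 {X : Type*} {d : ℕ} (f : X → X) (hf : Function.Bijective f)
    (A B C : X → GL (Fin d) ℝ) (N K : ℕ) (hN : 1 ≤ N) (hK : 1 ≤ K)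
    (hco : Nat.Coprime N K)
    (hCN : ∀ x, cocycleIter f A N x = C (f^[N] x) * cocycleIter f B N x * (C x)⁻¹)
    (hCK : ∀ x, cocycleIter f A K x = C (f^[K] x) * cocycleIter f B K x * (C x)⁻¹) :
    ∀ x, A x = C (f x) * B x * (C x)⁻¹ :=
  stmt4_general f hf A B C N K hco hCN hCK
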